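/- Let H = ⟨G, t | t⁻¹ u₀ t = v₀⟩ be an HNN-extension of G = ⟨X⟩ with associated cyclic subgroups generated by u₀ and v₀. Suppose u, v ∈ G are conjugate in H. Then either u and v are conjugate in G, or both u and v are commensurable in G with at least one of u₀ and v₀ (i.e., some nonzero powers are conjugate in G to nonzero powers of u₀ or v₀). -/

import Mathlib

/-!
If `c * of u * c⁻¹ = of v` with `c ∉ G`, write `c` as a reduced word whose last letter is
`t ^ ε * g`. Unless `g * u * g⁻¹` lies in the associated subgroup that `t ^ ε` conjugates, the word
of `c`, then `u`, then the inverse word of `c` is again reduced and contains `t`, contradicting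
Britton's lemma. Applied to `c` and to `c⁻¹`, this conjugates both `u` and `v` in `G` into
`⟨u₀⟩` or `⟨v₀⟩`; a nontrivial element conjugate to `y ^ k` has `k ≠ 0`.
-/

/-- `x` and `y` are commensurable in `G`: some nonzero power of `x` is conjugate in `G`
to some nonzero power of `y`. -/
def Commensurate {G : Type*} [Group G] (x y : G) : Prop :=
  ∃ m n : ℤ, m ≠ 0 ∧ n ≠ 0 ∧ IsConj (x ^ m) (y ^ n)

theorem commensurate_of_conj_mem_zpowers {G : Type*} [Group G] {x y c : G} (hx : x ≠ 1)
    (h : c * x * c⁻¹ ∈ Subgroup.zpowers y) : Commensurate x y := by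
  obtain ⟨k, hk⟩ := Subgroup.mem_zpowers_iff.1 h
  refine ⟨1, k, one_ne_zero, ?_, (zpow_one x).symm ▸ isConj_iff.2 ⟨c, hk.symm⟩⟩
  rintro rfl
  exact hx (by simpa using hk.symm)

namespace HNNExtension

open NormalWord

variable {G : Type*} [Group G] {A B : Subgroup G} {φ : A ≃* B}

variable (A B) in
/-- The defining condition of `ReducedWord`: `t ^ p.1 * p.2 * t ^ q.1` is not a pinch. -/
def NoPinch (p q : ℤˣ × G) : Prop :=
  p.2 ∈ toSubgroup A B p.1 → p.1 = q.1

theorem noPinch_neg_inv {p q : ℤˣ × G} (h : NoPinch A B p q) (g : G) :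
    NoPinch A B (-q.1, p.2⁻¹) (-p.1, g) := by
  intro hmem
  rcases Int.units_eq_one_or p.1 with hp | hp <;> rcases Int.units_eq_one_or q.1 with hq | hq <;>
    simp_all [NoPinch]

variable (φ) in
def lettersProd (l : List (ℤˣ × G)) : HNNExtension G A B φ :=
  (l.map fun x => t ^ (x.1 : ℤ) * of x.2).prod

@[simp]
theorem lettersProd_nil : lettersProd φ ([] : List (ℤˣ × G)) = 1 := rfl

@[simp]
theorem lettersProd_cons (p : ℤˣ × G) (l : List (ℤˣ × G)) :
    lettersProd φ (p :: l) = t ^ (p.1 : ℤ) * of p.2 * lettersProd φ l := by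
  simp [lettersProd]

@[simp]
theorem lettersProd_append (l₁ l₂ : List (ℤˣ × G)) :
    lettersProd φ (l₁ ++ l₂) = lettersProd φ l₁ * lettersProd φ l₂ := by
  simp [lettersProd]

/-- The letters of `w * of a * w⁻¹` for the reduced word `w = of h * lettersProd φ (p :: l)`. -/
def conjLetters (a : G) : G → ℤˣ × G → List (ℤˣ × G) → List (ℤˣ × G)
  | h, p, [] => [(p.1, p.2 * a * p.2⁻¹), (-p.1, h⁻¹)]
  | h, p, q :: l => p :: (conjLetters a p.2 q l ++ [(-p.1, h⁻¹)])

theorem exists_conjLetters_eq_cons (a h : G) (p : ℤˣ × G) (l : List (ℤˣ × G)) :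
    ∃ g rest, conjLetters a h p l = (p.1, g) :: rest := by
  cases l with
  | nil => exact ⟨_, _, rfl⟩
  | cons q l => exact ⟨p.2, _, rfl⟩

theorem getLast?_conjLetters (a h : G) (p : ℤˣ × G) (l : List (ℤˣ × G)) :
    (conjLetters a h p l).getLast? = some (-p.1, h⁻¹) := by
  cases l with
  | nil => simp [conjLetters]
  | cons q l => rw [conjLetters, ← List.cons_append, List.getLast?_concat]

theorem of_mul_lettersProd_conjLetters (a h : G) (p : ℤˣ × G) (l : List (ℤˣ × G)) :
    of h * lettersProd φ (conjLetters a h p l) =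
      of h * lettersProd φ (p :: l) * of a * (of h * lettersProd φ (p :: l))⁻¹ := by
  induction l generalizing h p with
  | nil =>
    simp only [conjLetters, lettersProd_cons, lettersProd_nil, map_mul, map_inv, Units.val_neg,
      zpow_neg]
    group
  | cons q l ih =>
    simp only [conjLetters, lettersProd_cons, lettersProd_append, lettersProd_nil, map_inv,
      Units.val_neg, zpow_neg] at ih ⊢
    rw [eq_inv_mul_of_mul_eq (ih p.2 q)]
    group

theorem isChain_conjLetters (a h : G) (p : ℤˣ × G) (l : List (ℤˣ × G))
    (hchain : (p :: l).IsChain (NoPinch A B))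
    (hlast : ∀ r ∈ (p :: l).getLast?, r.2 * a * r.2⁻¹ ∉ toSubgroup A B r.1) :
    (conjLetters a h p l).IsChain (NoPinch A B) := by
  induction l generalizing h p with
  | nil =>
    exact List.isChain_pair.2 fun hmem => (hlast p rfl hmem).elim
  | cons q l ih =>
    obtain ⟨hpq, hql⟩ := List.isChain_cons_cons.1 hchain
    have hinner := ih p.2 q hql (by simpa [List.getLast?_cons_cons] using hlast)
    have htail := hinner.append (List.isChain_singleton (-p.1, h⁻¹)) (by
      simp only [getLast?_conjLetters, Option.mem_def, Option.some.injEq, List.head?_cons]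
      rintro _ rfl _ rfl
      exact noPinch_neg_inv hpq h⁻¹)
    obtain ⟨g, rest, heq⟩ := exists_conjLetters_eq_cons a p.2 q l
    rw [heq] at htail
    rw [conjLetters, heq, List.cons_append, List.isChain_cons_cons]
    exact ⟨hpq, htail⟩

theorem NormalWord.ReducedWord.exists_conj_mem_toSubgroup_of_conj_mem_range
    (w : ReducedWord G A B) (hw : w.toList ≠ []) {a : G}
    (h : w.prod φ * of a * (w.prod φ)⁻¹ ∈ (of.range : Subgroup (HNNExtension G A B φ))) :
    ∃ ε c, c * a * c⁻¹ ∈ toSubgroup A B ε := by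
  obtain ⟨head, _ | ⟨p, l⟩, hchain⟩ := w
  · exact absurd rfl hw
  by_contra! hne
  let w' : ReducedWord G A B := ⟨head, conjLetters a head p l,
    isChain_conjLetters a head p l hchain fun r _ => hne r.1 r.2⟩
  have hprod : w'.prod φ = _ := of_mul_lettersProd_conjLetters a head p l
  obtain ⟨g, rest, heq⟩ := exists_conjLetters_eq_cons a head p l
  have hnil : conjLetters a head p l = [] :=
    HNNExtension.ReducedWord.toList_eq_nil_of_mem_of_range φ w' (hprod ▸ h)
  simp [heq] at hnil

theorem exists_reducedWord_prod_eq (c : HNNExtension G A B φ) :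
    ∃ w : ReducedWord G A B, w.prod φ = c := by
  obtain ⟨d⟩ := TransversalPair.nonempty G A B
  exact ⟨(NormalWord.equiv φ d c).toReducedWord, (NormalWord.equiv φ d).symm_apply_apply c⟩

theorem exists_conj_mem_toSubgroup_of_conj_mem_range {c : HNNExtension G A B φ}
    (hc : c ∉ (of.range : Subgroup (HNNExtension G A B φ))) {a : G}
    (h : c * of a * c⁻¹ ∈ (of.range : Subgroup (HNNExtension G A B φ))) :
    ∃ ε g, g * a * g⁻¹ ∈ toSubgroup A B ε := by
  obtain ⟨w, rfl⟩ := exists_reducedWord_prod_eq c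
  refine w.exists_conj_mem_toSubgroup_of_conj_mem_range (fun hnil => hc ?_) h
  exact ⟨w.head, by simp [ReducedWord.prod, hnil]⟩

theorem isConj_or_exists_conj_mem_toSubgroup_of_isConj_of {u v : G}
    (h : IsConj (of u : HNNExtension G A B φ) (of v)) :
    IsConj u v ∨ ((∃ ε c, c * u * c⁻¹ ∈ toSubgroup A B ε) ∧
      (∃ ε c, c * v * c⁻¹ ∈ toSubgroup A B ε)) := by
  obtain ⟨c, hc⟩ := isConj_iff.1 h
  by_cases hmem : c ∈ (of.range : Subgroup (HNNExtension G A B φ))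
  · obtain ⟨g, rfl⟩ := hmem
    exact .inl (isConj_iff.2 ⟨g, of_injective φ (by simpa using hc)⟩)
  · refine .inr ⟨exists_conj_mem_toSubgroup_of_conj_mem_range hmem ⟨v, hc.symm⟩,
      exists_conj_mem_toSubgroup_of_conj_mem_range (inv_mem_iff.not.2 hmem) ⟨u, ?_⟩⟩
    rw [← hc]
    group

theorem commensurate_of_conj_mem_toSubgroup_zpowers {u₀ v₀ x c : G} {ε : ℤˣ} (hx : x ≠ 1)
    (h : c * x * c⁻¹ ∈ toSubgroup (Subgroup.zpowers u₀) (Subgroup.zpowers v₀) ε) :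
    Commensurate x u₀ ∨ Commensurate x v₀ := by
  rcases Int.units_eq_one_or ε with rfl | rfl
  · exact .inl (commensurate_of_conj_mem_zpowers hx h)
  · exact .inr (commensurate_of_conj_mem_zpowers hx h)

end HNNExtension

theorem stmt10_general {G : Type*} [Group G] (u₀ v₀ : G)
    (φ : (Subgroup.zpowers u₀) ≃* (Subgroup.zpowers v₀))
    (u v : G)
    (h : IsConj
      (HNNExtension.of u : HNNExtension G (Subgroup.zpowers u₀) (Subgroup.zpowers v₀) φ)
      (HNNExtension.of v)) :
    IsConj u v ∨
      ((Commensurate u u₀ ∨ Commensurate u v₀) ∧ (Commensurate v u₀ ∨ Commensurate v v₀)) := by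
  rcases HNNExtension.isConj_or_exists_conj_mem_toSubgroup_of_isConj_of h with
    huv | ⟨⟨_, _, hu⟩, ⟨_, _, hv⟩⟩
  · exact .inl huv
  have hu_iff_hv : u = 1 ↔ v = 1 := by
    simp only [← map_eq_one_iff _ (HNNExtension.of_injective φ)]
    exact ⟨fun hu => isConj_one_right.1 (hu ▸ h), fun hv => isConj_one_left.1 (hv ▸ h)⟩
  by_cases hu1 : u = 1
  · exact .inl (by rw [hu1, hu_iff_hv.1 hu1])
  exact .inr ⟨HNNExtension.commensurate_of_conj_mem_toSubgroup_zpowers hu1 hu,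
    HNNExtension.commensurate_of_conj_mem_toSubgroup_zpowers (hu_iff_hv.not.1 hu1) hv⟩

theorem stmt10 {G : Type*} [Group G] (u₀ v₀ : G)
    (φ : (Subgroup.zpowers u₀) ≃* (Subgroup.zpowers v₀))
    (hφ : ((φ ⟨u₀, Subgroup.mem_zpowers u₀⟩ : Subgroup.zpowers v₀) : G) = v₀)
    (u v : G)
    (h : IsConj
      (HNNExtension.of u : HNNExtension G (Subgroup.zpowers u₀) (Subgroup.zpowers v₀) φ)
      (HNNExtension.of v)) :
    IsConj u v ∨
      ((Commensurate u u₀ ∨ Commensurate u v₀) ∧ (Commensurate v u₀ ∨ Commensurate v v₀)) :=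
  stmt10_general u₀ v₀ φ u v h
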